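/- arXiv:2007.11783 — 6 statements merged into one kernel-verified Lean document; each statement's English description precedes it below -/
import Mathlib

section
/- Let n ≥ 2, 1 ≤ b ≤ n, and let ψ_1, …, ψ_n ∈ ℝ^d satisfy Σ_{i=1}^n ψ_i = 0. If I is a subset of {1, …, n} of cardinality b chosen uniformly at random (each of the binom(n, b) such subsets having equal probability), then E‖(1/b) Σ_{i∈I} ψ_i‖² = ((n − b)/(b(n − 1))) · (1/n) Σ_{i=1}^n ‖ψ_i‖². -/
open Finset
open scoped RealInnerProductSpace

/-!
Expanding `‖∑_{i ∈ I} ψ i‖²` into inner products and summing over all `b`-subsets `I`, each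
`⟪ψ i, ψ j⟫` is weighted by the number of `b`-subsets containing `{i, j}`. By
`C(n, b) C(b, k) = C(n, k) C(n - k, b - k)` this is `C(n, b) b / n` on the diagonal and
`C(n, b) b (b - 1) / (n (n - 1))` off it, and the off-diagonal inner products add up to
`‖∑ i, ψ i‖² - ∑ i, ‖ψ i‖² = -∑ i, ‖ψ i‖²`.
-/

theorem Finset.card_filter_powersetCard_subset_mul_choose {α : Type*} [DecidableEq α]
    (s t : Finset α) (b : ℕ) (hts : t ⊆ s) :
    #{I ∈ s.powersetCard b | t ⊆ I} * (#s).choose #t = (#s).choose b * b.choose #t := by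
  rcases le_or_gt #t b with htb | hbt
  · rw [card_filter_powersetCard_subset t s b hts htb, Nat.choose_mul htb, mul_comm]
  · have hempty : {I ∈ s.powersetCard b | t ⊆ I} = ∅ :=
      filter_eq_empty_iff.2 fun I hI htI =>
        (card_le_card htI).not_gt ((mem_powersetCard.1 hI).2 ▸ hbt)
    simp [hempty, Nat.choose_eq_zero_of_lt hbt]

section InnerProduct

variable {ι E : Type*} [NormedAddCommGroup E] [InnerProductSpace ℝ E]

theorem norm_sum_sq_eq_sum_sum_inner (s : Finset ι) (f : ι → E) :
    ‖∑ i ∈ s, f i‖ ^ 2 = ∑ i ∈ s, ∑ j ∈ s, ⟪f i, f j⟫ := by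
  simp_rw [← real_inner_self_eq_norm_sq, sum_inner, inner_sum]

variable [Fintype ι] [DecidableEq ι]

theorem sum_norm_sum_sq_eq_sum_sum_card_mul_inner (𝒜 : Finset (Finset ι)) (f : ι → E) :
    ∑ I ∈ 𝒜, ‖∑ i ∈ I, f i‖ ^ 2
      = ∑ i, ∑ j, (#{I ∈ 𝒜 | i ∈ I ∧ j ∈ I} : ℝ) * ⟪f i, f j⟫ := by
  have hmem : ∀ I : Finset ι, ∑ i ∈ I, ∑ j ∈ I, ⟪f i, f j⟫
      = ∑ i, ∑ j, if i ∈ I ∧ j ∈ I then ⟪f i, f j⟫ else 0 := by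
    intro I
    simp only [ite_and, sum_ite_irrel, sum_ite_mem, univ_inter, sum_const_zero]
  simp_rw [norm_sum_sq_eq_sum_sum_inner, hmem]
  rw [sum_comm]
  simp_rw [sum_comm (s := 𝒜), ← sum_filter, sum_const, nsmul_eq_mul]

theorem sum_sum_mul_inner_of_eq_ite (f : ι → E) (w : ι → ι → ℝ) (α β : ℝ)
    (hw : ∀ i j, w i j = if i = j then α else β) :
    ∑ i, ∑ j, w i j * ⟪f i, f j⟫ = (α - β) * ∑ i, ‖f i‖ ^ 2 + β * ‖∑ i, f i‖ ^ 2 := by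
  have hw' : ∀ i j, w i j = β + if i = j then α - β else 0 := by
    intro i j; rw [hw]; split_ifs <;> ring
  simp_rw [hw', add_mul, sum_add_distrib, ite_mul, zero_mul, sum_ite_eq, mem_univ, if_true,
    real_inner_self_eq_norm_sq, ← mul_sum, norm_sum_sq_eq_sum_sum_inner]
  ring

open Fintype in
theorem cast_card_filter_mem_mem_powersetCard (b : ℕ) (i j : ι) :
    (#{I ∈ powersetCard b (univ : Finset ι) | i ∈ I ∧ j ∈ I} : ℝ)
      = if i = j then ((card ι).choose b : ℝ) * b / card ι
        else ((card ι).choose b : ℝ) * (b * (b - 1)) / (card ι * (card ι - 1)) := by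
  split_ifs with hij
  · subst hij
    have hcount := card_filter_powersetCard_subset_mul_choose univ {i} b (subset_univ _)
    simp only [singleton_subset_iff, card_singleton, Nat.choose_one_right, card_univ] at hcount
    simp only [and_self]
    rw [eq_div_iff (Nat.cast_ne_zero.2 (card_pos_iff.2 ⟨i⟩).ne')]
    exact_mod_cast hcount
  · have hcount := card_filter_powersetCard_subset_mul_choose univ {i, j} b (subset_univ _)
    simp only [insert_subset_iff, singleton_subset_iff, card_pair hij, card_univ] at hcount
    have hn : (2 : ℝ) ≤ card ι := by
      exact_mod_cast (card_pair hij).symm.le.trans (card_le_univ {i, j})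
    replace hcount := congrArg (Nat.cast (R := ℝ)) hcount
    push_cast [Nat.cast_choose_two] at hcount
    rw [eq_div_iff (by nlinarith)]
    linarith

open Fintype in
theorem sum_powersetCard_norm_sum_sq (hn : 2 ≤ card ι) (b : ℕ) (f : ι → E) :
    ∑ I ∈ powersetCard b univ, ‖∑ i ∈ I, f i‖ ^ 2
      = ((card ι).choose b : ℝ) * b / (card ι * (card ι - 1))
        * ((card ι - b) * ∑ i, ‖f i‖ ^ 2 + (b - 1) * ‖∑ i, f i‖ ^ 2) := by
  rw [sum_norm_sum_sq_eq_sum_sum_card_mul_inner,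
    sum_sum_mul_inner_of_eq_ite f _ _ _ (cast_card_filter_mem_mem_powersetCard b)]
  have hn₀ : (card ι : ℝ) ≠ 0 := by positivity
  have hn₁ : (card ι : ℝ) - 1 ≠ 0 := by
    have : (2 : ℝ) ≤ card ι := by exact_mod_cast hn
    linarith
  field_simp
  ring

end InnerProduct

theorem stmt_1_general {d n : ℕ} (hn : 2 ≤ n) (b : ℕ) (hbn : b ≤ n)
    (ψ : Fin n → EuclideanSpace ℝ (Fin d))
    (hsum : ∑ i, ψ i = 0) :
    (∑ I ∈ Finset.powersetCard b (Finset.univ : Finset (Fin n)),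
        ‖(b : ℝ)⁻¹ • ∑ i ∈ I, ψ i‖ ^ 2)
      / ((Finset.powersetCard b (Finset.univ : Finset (Fin n))).card : ℝ)
    = ((n : ℝ) - b) / (b * ((n : ℝ) - 1)) * ((n : ℝ)⁻¹ * ∑ i, ‖ψ i‖ ^ 2) := by
  have hn' : 2 ≤ Fintype.card (Fin n) := by rwa [Fintype.card_fin]
  simp_rw [norm_smul, norm_inv, Real.norm_natCast, mul_pow, ← mul_sum,
    sum_powersetCard_norm_sum_sq hn', hsum, norm_zero, card_powersetCard, card_univ,
    Fintype.card_fin]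
  have hC : (n.choose b : ℝ) ≠ 0 := by exact_mod_cast (Nat.choose_pos hbn).ne'
  field_simp
  ring

/-- exact variance identity for uniform sampling without replacement.
The expectation is the average over all `binom(n, b)` subsets `I ⊆ {1, …, n}` with
`|I| = b`, each with equal weight. -/
theorem stmt_1 {d n : ℕ} (hn : 2 ≤ n) (b : ℕ) (hb1 : 1 ≤ b) (hbn : b ≤ n)
    (ψ : Fin n → EuclideanSpace ℝ (Fin d))
    (hsum : ∑ i, ψ i = 0) :
    (∑ I ∈ Finset.powersetCard b (Finset.univ : Finset (Fin n)),
        ‖(b : ℝ)⁻¹ • ∑ i ∈ I, ψ i‖ ^ 2)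
      / ((Finset.powersetCard b (Finset.univ : Finset (Fin n))).card : ℝ)
    = ((n : ℝ) - b) / (b * ((n : ℝ) - 1)) * ((n : ℝ)⁻¹ * ∑ i, ‖ψ i‖ ^ 2) :=
  stmt_1_general hn b hbn ψ hsum
end

section
/- Let f_i : ℝ^d → ℝ (i = 1, …, n) be convex and differentiable with L_i-Lipschitz continuous gradient, L_max = max_i L_i, and f = (1/n) Σ_{i=1}^n f_i. Then for every x, y ∈ ℝ^d, (1/n) Σ_{i=1}^n ‖∇f_i(x) − ∇f_i(y)‖² ≤ 2 L_max (f(x) − f(y) − ⟨∇f(y), x − y⟩). -/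
/-!
Each `f i` satisfies the cocoercivity bound `‖∇f_i(x) − ∇f_i(y)‖² ≤ 2 L (f_i(x) − f_i(y) −
⟨∇f_i(y), x − y⟩)` for any Lipschitz constant `L` of its gradient, in particular for `L_max`;
averaging over `i` gives the claim. Cocoercivity compares the quadratic upper bound of the
descent lemma at `x` with the affine lower bound given by convexity at `y`, both evaluated at the
gradient step `x − L⁻¹ (∇f_i(x) − ∇f_i(y))`.
-/

open scoped RealInnerProductSpace

section
variable {E : Type*} [NormedAddCommGroup E] [InnerProductSpace ℝ E] [CompleteSpace E]
  {g : E → ℝ}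

theorem HasGradientAt.hasDerivAt_comp_add_smul {G w v : E} {t : ℝ}
    (h : HasGradientAt g G (w + t • v)) :
    HasDerivAt (fun s : ℝ => g (w + s • v)) ⟪G, v⟫ t := by
  have hline : HasDerivAt (fun s : ℝ => w + s • v) v t := by
    simpa using ((hasDerivAt_id t).smul_const v).const_add w
  have := (hasGradientAt_iff_hasFDerivAt.mp h).comp_hasDerivAt t hline
  simp only [InnerProductSpace.toDual_apply_apply] at this
  exact this

theorem ConvexOn.add_inner_sub_le_of_hasGradientAt {G w : E} (hconv : ConvexOn ℝ Set.univ g)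
    (hg : HasGradientAt g G w) (u : E) : g w + ⟪G, u - w⟫ ≤ g u := by
  have hline : ConvexOn ℝ Set.univ (fun t : ℝ => g (w + t • (u - w))) := by
    have := hconv.comp_affineMap (AffineMap.lineMap w u)
    simpa [Function.comp_def, AffineMap.lineMap_apply, add_comm] using this
  have hslope := hline.le_slope_of_hasDerivAt (Set.mem_univ 0) (Set.mem_univ 1) one_pos
    (HasGradientAt.hasDerivAt_comp_add_smul (t := 0) (v := u - w) (by simpa using hg))
  simp only [slope_def_field, one_smul, add_sub_cancel, zero_smul, add_zero, sub_zero,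
    div_one] at hslope
  linarith

theorem le_add_inner_sub_add_sq_of_gradient_lipschitz {g' : E → E} {L : ℝ} {w : E}
    (hg : ∀ z, HasGradientAt g (g' z) z) (hLip : ∀ z, ‖g' z - g' w‖ ≤ L * ‖z - w‖) (u : E) :
    g u ≤ g w + ⟪g' w, u - w⟫ + L / 2 * ‖u - w‖ ^ 2 := by
  set v := u - w
  set φ : ℝ → ℝ := fun t => g (w + t • v) - t * ⟪g' w, v⟫ - L / 2 * t ^ 2 * ‖v‖ ^ 2
  have hφ : ∀ t, HasDerivAt φ (⟪g' (w + t • v) - g' w, v⟫ - L * t * ‖v‖ ^ 2) t := by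
    intro t
    have hsq := ((hasDerivAt_pow 2 t).const_mul (L / 2)).mul_const (‖v‖ ^ 2)
    have hlin := (hasDerivAt_id t).mul_const ⟪g' w, v⟫
    refine (((hg (w + t • v)).hasDerivAt_comp_add_smul.sub hlin).sub hsq).congr_deriv ?_
    simp only [inner_sub_left, one_mul]
    ring
  have hanti : AntitoneOn φ (Set.Icc 0 1) := by
    refine antitoneOn_of_hasDerivWithinAt_nonpos (convex_Icc 0 1)
      (fun t _ => (hφ t).continuousAt.continuousWithinAt) (fun t _ => (hφ t).hasDerivWithinAt) ?_
    intro t ht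
    rw [interior_Icc] at ht
    have hstep : ‖w + t • v - w‖ = t * ‖v‖ := by
      simp [norm_smul, abs_of_pos ht.1]
    calc ⟪g' (w + t • v) - g' w, v⟫ - L * t * ‖v‖ ^ 2
        ≤ ‖g' (w + t • v) - g' w‖ * ‖v‖ - L * t * ‖v‖ ^ 2 := by
          gcongr; exact real_inner_le_norm _ _
      _ ≤ L * (t * ‖v‖) * ‖v‖ - L * t * ‖v‖ ^ 2 := by
          gcongr; exact hstep ▸ hLip _
      _ = 0 := by ring
  have := hanti (Set.left_mem_Icc.2 zero_le_one) (Set.right_mem_Icc.2 zero_le_one) zero_le_one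
  simp only [φ, v, one_smul, add_sub_cancel, zero_smul, add_zero] at this
  linarith

theorem ConvexOn.sq_norm_gradient_sub_le {g' : E → E} {L : ℝ} (hconv : ConvexOn ℝ Set.univ g)
    (hg : ∀ z, HasGradientAt g (g' z) z) (hLip : ∀ u w, ‖g' u - g' w‖ ≤ L * ‖u - w‖) (x y : E) :
    ‖g' x - g' y‖ ^ 2 ≤ 2 * L * (g x - g y - ⟪g' y, x - y⟫) := by
  set p := g' x - g' y
  rcases le_or_gt L 0 with hL | hL
  · have hp : ‖p‖ ≤ L * ‖x - y‖ := hLip x y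
    have : L * ‖x - y‖ = 0 :=
      le_antisymm (mul_nonpos_of_nonpos_of_nonneg hL (norm_nonneg _)) ((norm_nonneg p).trans hp)
    have hp0 : p = 0 := norm_le_zero_iff.1 (hp.trans this.le)
    rcases mul_eq_zero.1 this with hL0 | hxy
    · simp [hp0, hL0]
    · simp [hp0, norm_sub_eq_zero_iff.1 hxy]
  have hupper := le_add_inner_sub_add_sq_of_gradient_lipschitz hg (hLip · x) (x - L⁻¹ • p)
  have hlower := hconv.add_inner_sub_le_of_hasGradientAt (hg y) (x - L⁻¹ • p)
  have hinner : L⁻¹ * ⟪g' x, p⟫ - L⁻¹ * ⟪g' y, p⟫ = L⁻¹ * ‖p‖ ^ 2 := by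
    rw [← mul_sub, ← inner_sub_left, real_inner_self_eq_norm_sq]
  rw [sub_sub_cancel_left, norm_neg, norm_smul, Real.norm_of_nonneg (inv_nonneg.2 hL.le),
    inner_neg_right, real_inner_smul_right] at hupper
  rw [sub_right_comm, inner_sub_right, real_inner_smul_right] at hlower
  have key : ‖p‖ ^ 2 / (2 * L) ≤ g x - g y - ⟪g' y, x - y⟫ := by
    have : L / 2 * (L⁻¹ * ‖p‖) ^ 2 = L⁻¹ * ‖p‖ ^ 2 - ‖p‖ ^ 2 / (2 * L) := by
      field_simp; ring
    linarith
  rwa [div_le_iff₀ (by positivity), mul_comm] at key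

end

theorem stmt_2_general {d n : ℕ}
    (f : Fin n → EuclideanSpace ℝ (Fin d) → ℝ)
    (f' : Fin n → EuclideanSpace ℝ (Fin d) → EuclideanSpace ℝ (Fin d))
    (hconv : ∀ i, ConvexOn ℝ Set.univ (f i))
    (hgrad : ∀ i x, HasGradientAt (f i) (f' i x) x)
    (L : Fin n → ℝ)
    (hLip : ∀ i x y, ‖f' i x - f' i y‖ ≤ L i * ‖x - y‖)
    (Lmax : ℝ) (hLmax : IsGreatest (Set.range L) Lmax)
    (x y : EuclideanSpace ℝ (Fin d)) :
    (n : ℝ)⁻¹ * ∑ i, ‖f' i x - f' i y‖ ^ 2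
      ≤ 2 * Lmax * (((n : ℝ)⁻¹ * ∑ i, f i x) - ((n : ℝ)⁻¹ * ∑ i, f i y)
          - ⟪(n : ℝ)⁻¹ • ∑ i, f' i y, x - y⟫) := by
  have hLip_max : ∀ i u w, ‖f' i u - f' i w‖ ≤ Lmax * ‖u - w‖ := fun i u w =>
    (hLip i u w).trans (by gcongr; exact hLmax.2 ⟨i, rfl⟩)
  calc (n : ℝ)⁻¹ * ∑ i, ‖f' i x - f' i y‖ ^ 2
      ≤ (n : ℝ)⁻¹ * ∑ i, 2 * Lmax * (f i x - f i y - ⟪f' i y, x - y⟫) := by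
        gcongr with i
        exact (hconv i).sq_norm_gradient_sub_le (hgrad i) (hLip_max i) x y
    _ = _ := by
        rw [real_inner_smul_left, sum_inner, ← Finset.mul_sum, Finset.sum_sub_distrib,
          Finset.sum_sub_distrib]
        ring

/-- for convex `f_i` with `L_i`-Lipschitz gradients and
`f = (1/n) Σ f_i`, `L_max = max_i L_i`, one has
`(1/n) Σ ‖∇f_i(x) − ∇f_i(y)‖² ≤ 2 L_max (f(x) − f(y) − ⟨∇f(y), x − y⟩)`. -/
theorem stmt_2 {d n : ℕ} (hn : 1 ≤ n)
    (f : Fin n → EuclideanSpace ℝ (Fin d) → ℝ)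
    (f' : Fin n → EuclideanSpace ℝ (Fin d) → EuclideanSpace ℝ (Fin d))
    (hconv : ∀ i, ConvexOn ℝ Set.univ (f i))
    (hgrad : ∀ i x, HasGradientAt (f i) (f' i x) x)
    (L : Fin n → ℝ)
    (hLip : ∀ i x y, ‖f' i x - f' i y‖ ≤ L i * ‖x - y‖)
    (Lmax : ℝ) (hLmax : IsGreatest (Set.range L) Lmax)
    (x y : EuclideanSpace ℝ (Fin d)) :
    (n : ℝ)⁻¹ * ∑ i, ‖f' i x - f' i y‖ ^ 2
      ≤ 2 * Lmax * (((n : ℝ)⁻¹ * ∑ i, f i x) - ((n : ℝ)⁻¹ * ∑ i, f i y)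
          - ⟪(n : ℝ)⁻¹ • ∑ i, f' i y, x - y⟫) :=
  stmt_2_general f f' hconv hgrad L hLip Lmax hLmax x y
end

section
/- Let f : ℝ^d → ℝ be convex and differentiable with (1/β)-Lipschitz continuous gradient, B an r×d real matrix, and 0 < γ ≤ β. Given x_k, w ∈ ℝ^d and v_{k+1} ∈ ℝ^r, define x_{k+1} = x_k − γw − γBᵀv_{k+1} and x̄_k = x_k − γ∇f(x_k) − γBᵀv_{k+1}. Then for every x ∈ ℝ^d: 2γ(f(x_{k+1}) − f(x)) ≤ ‖x_k − x‖² − ‖x_{k+1} − x‖² + 2γ²‖w − ∇f(x_k)‖² + 2γ⟨B(x − x_{k+1}), v_{k+1}⟩ − 2γ⟨w − ∇f(x_k), x̄_k − x⟩. -/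
/-!
Convexity gives `f x ≥ f x_k + ⟪∇f x_k, x - x_k⟫` and the descent lemma for a `(1/β)`-Lipschitz
gradient gives `f x_{k+1} ≤ f x_k + ⟪∇f x_k, x_{k+1} - x_k⟫ + ‖x_{k+1} - x_k‖² / (2β)`, so
`f x_{k+1} - f x ≤ ⟪∇f x_k, x_{k+1} - x⟫ + ‖x_{k+1} - x_k‖² / (2β)`. As `γ ≤ β`, `2γ` times this is
at most `2γ ⟪∇f x_k, x_{k+1} - x⟫ + ‖x_{k+1} - x_k‖²`, and expanding the squares with
`x_{k+1} = x̄_k - γ (w - ∇f x_k)` shows that this equals the right-hand side.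
-/

open scoped RealInnerProductSpace
open Set AffineMap

section Gradient

variable {E : Type*} [NormedAddCommGroup E] [InnerProductSpace ℝ E] [CompleteSpace E]
  {f : E → ℝ}

theorem HasGradientAt.hasDerivAt_comp_lineMap {g a b : E} {t : ℝ}
    (h : HasGradientAt f g (lineMap a b t)) :
    HasDerivAt (f ∘ lineMap a b) ⟪g, b - a⟫ t := by
  simpa using (hasGradientAt_iff_hasFDerivAt.mp h).comp_hasDerivAt t hasDerivAt_lineMap

theorem ConvexOn.add_inner_gradient_le (hf : ConvexOn ℝ univ f) {g a : E}
    (hg : HasGradientAt f g a) (b : E) : f a + ⟪g, b - a⟫ ≤ f b := by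
  have hline : ConvexOn ℝ univ (f ∘ lineMap (k := ℝ) a b) := hf.comp_affineMap (lineMap a b)
  have hderiv : HasDerivAt (f ∘ lineMap (k := ℝ) a b) ⟪g, b - a⟫ 0 :=
    HasGradientAt.hasDerivAt_comp_lineMap (by simpa using hg)
  have hslope := hline.le_slope_of_hasDerivAt (mem_univ 0) (mem_univ 1) zero_lt_one hderiv
  simp only [slope_def_field, Function.comp_apply, lineMap_apply_one, lineMap_apply_zero, sub_zero,
    div_one] at hslope
  linarith

theorem le_add_inner_gradient_add_of_lipschitz {f' : E → E} {L : ℝ}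
    (hgrad : ∀ x, HasGradientAt f (f' x) x) (hLip : ∀ x y, ‖f' x - f' y‖ ≤ L * ‖x - y‖)
    (a b : E) : f b ≤ f a + ⟪f' a, b - a⟫ + L / 2 * ‖b - a‖ ^ 2 := by
  set φ : ℝ → ℝ := fun t ↦
    f (lineMap a b t) - t * ⟪f' a, b - a⟫ - t ^ 2 / 2 * (L * ‖b - a‖ ^ 2) with hφ
  have hφ' : ∀ t, HasDerivAt φ
      (⟪f' (lineMap a b t), b - a⟫ - ⟪f' a, b - a⟫ - t * (L * ‖b - a‖ ^ 2)) t := by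
    intro t
    refine ((((hgrad (lineMap a b t)).hasDerivAt_comp_lineMap).sub
      ((hasDerivAt_id t).mul_const ⟪f' a, b - a⟫)).sub
      (((hasDerivAt_pow 2 t).div_const 2).mul_const (L * ‖b - a‖ ^ 2))).congr_deriv ?_
    norm_num
  have hnonpos : ∀ t ∈ interior (Ici (0 : ℝ)),
      ⟪f' (lineMap a b t), b - a⟫ - ⟪f' a, b - a⟫ - t * (L * ‖b - a‖ ^ 2) ≤ 0 := by
    intro t ht
    rw [interior_Ici, mem_Ioi] at ht
    have hdist : ‖f' (lineMap a b t) - f' a‖ ≤ L * (t * ‖b - a‖) := by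
      simpa [lineMap_apply, norm_smul, abs_of_pos ht] using hLip (lineMap a b t) a
    rw [sub_nonpos]
    calc ⟪f' (lineMap a b t), b - a⟫ - ⟪f' a, b - a⟫
        = ⟪f' (lineMap a b t) - f' a, b - a⟫ := (inner_sub_left _ _ _).symm
      _ ≤ ‖f' (lineMap a b t) - f' a‖ * ‖b - a‖ := real_inner_le_norm _ _
      _ ≤ L * (t * ‖b - a‖) * ‖b - a‖ := by gcongr
      _ = t * (L * ‖b - a‖ ^ 2) := by ring
  have hanti : AntitoneOn φ (Ici 0) :=
    antitoneOn_of_hasDerivWithinAt_nonpos (convex_Ici 0)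
      (fun t _ ↦ (hφ' t).continuousAt.continuousWithinAt)
      (fun t _ ↦ (hφ' t).hasDerivWithinAt) hnonpos
  have hφ10 : φ 1 ≤ φ 0 := hanti self_mem_Ici (mem_Ici.mpr zero_le_one) zero_le_one
  simp only [hφ, lineMap_apply_one, lineMap_apply_zero, one_mul, one_pow, zero_mul, sub_zero,
    zero_pow two_ne_zero, zero_div] at hφ10
  linarith

theorem ConvexOn.sub_le_inner_gradient_add_of_lipschitz (hf : ConvexOn ℝ univ f) {f' : E → E}
    {L : ℝ} (hgrad : ∀ x, HasGradientAt f (f' x) x)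
    (hLip : ∀ x y, ‖f' x - f' y‖ ≤ L * ‖x - y‖) (x y z : E) :
    f y - f x ≤ ⟪f' z, y - x⟫ + L / 2 * ‖y - z‖ ^ 2 := by
  have hupper := le_add_inner_gradient_add_of_lipschitz hgrad hLip z y
  have hlower := hf.add_inner_gradient_le (hgrad z) x
  have hsplit : ⟪f' z, y - z⟫ - ⟪f' z, x - z⟫ = ⟪f' z, y - x⟫ := by
    rw [← inner_sub_right, sub_sub_sub_cancel_right]
  linarith

end Gradient

theorem primal_step_identity {E : Type*} [NormedAddCommGroup E] [InnerProductSpace ℝ E]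
    {x xk w g u y z : E} {γ : ℝ} (hy : y = xk - γ • w - γ • u) (hz : z = xk - γ • g - γ • u) :
    ‖xk - x‖ ^ 2 - ‖y - x‖ ^ 2 + 2 * γ ^ 2 * ‖w - g‖ ^ 2 + 2 * γ * ⟪x - y, u⟫
        - 2 * γ * ⟪w - g, z - x⟫
      = 2 * γ * ⟪g, y - x⟫ + ‖y - xk‖ ^ 2 := by
  have hxk : xk - x = (y - x) + γ • (w + u) := by rw [hy]; module
  have hz' : z - x = (y - x) + γ • (w - g) := by rw [hz, hy]; module
  have hyx : x - y = -(y - x) := (neg_sub _ _).symm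
  have hyxk : y - xk = -(γ • (w + u)) := by rw [hy]; module
  rw [hxk, hz', hyx, hyxk]
  generalize y - x = d
  simp only [← real_inner_self_eq_norm_sq, inner_add_left, inner_add_right, inner_sub_left,
    inner_sub_right, inner_neg_left, inner_neg_right, real_inner_smul_left, real_inner_smul_right]
  rw [real_inner_comm d w, real_inner_comm d u, real_inner_comm d g, real_inner_comm u w]
  ring

/-- the one-step primal estimate (Lemma 2 of the paper) for the
SVRG-PDFP primal update `x_{k+1} = x_k − γw − γBᵀv_{k+1}`, with
`x̄_k = x_k − γ∇f(x_k) − γBᵀv_{k+1}`. -/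
theorem stmt_4 {d r : ℕ}
    (f : EuclideanSpace ℝ (Fin d) → ℝ)
    (f' : EuclideanSpace ℝ (Fin d) → EuclideanSpace ℝ (Fin d))
    (hconv : ConvexOn ℝ Set.univ f)
    (hgrad : ∀ x, HasGradientAt f (f' x) x)
    (β : ℝ)
    (hLip : ∀ x y, ‖f' x - f' y‖ ≤ (1 / β) * ‖x - y‖)
    (B : EuclideanSpace ℝ (Fin d) →L[ℝ] EuclideanSpace ℝ (Fin r))
    (γ : ℝ) (hγ0 : 0 < γ) (hγβ : γ ≤ β)
    (xk w : EuclideanSpace ℝ (Fin d)) (vk1 : EuclideanSpace ℝ (Fin r))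
    (xk1 : EuclideanSpace ℝ (Fin d))
    (hxk1 : xk1 = xk - γ • w - γ • ContinuousLinearMap.adjoint B vk1)
    (xbar : EuclideanSpace ℝ (Fin d))
    (hxbar : xbar = xk - γ • f' xk - γ • ContinuousLinearMap.adjoint B vk1) :
    ∀ x : EuclideanSpace ℝ (Fin d),
      2 * γ * (f xk1 - f x)
        ≤ ‖xk - x‖ ^ 2 - ‖xk1 - x‖ ^ 2
          + 2 * γ ^ 2 * ‖w - f' xk‖ ^ 2
          + 2 * γ * ⟪B (x - xk1), vk1⟫
          - 2 * γ * ⟪w - f' xk, xbar - x⟫ := by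
  intro x
  have hstep := hconv.sub_le_inner_gradient_add_of_lipschitz hgrad hLip x xk1 xk
  have hratio : γ / β ≤ 1 := (div_le_one (hγ0.trans_le hγβ)).mpr hγβ
  rw [← ContinuousLinearMap.adjoint_inner_right, primal_step_identity hxk1 hxbar]
  calc 2 * γ * (f xk1 - f x)
      ≤ 2 * γ * (⟪f' xk, xk1 - x⟫ + 1 / β / 2 * ‖xk1 - xk‖ ^ 2) := by gcongr
    _ = 2 * γ * ⟪f' xk, xk1 - x⟫ + γ / β * ‖xk1 - xk‖ ^ 2 := by ring
    _ ≤ 2 * γ * ⟪f' xk, xk1 - x⟫ + ‖xk1 - xk‖ ^ 2 := by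
      gcongr
      exact mul_le_of_le_one_left (sq_nonneg _) hratio
end

section
/- Let f : ℝ^d → ℝ be convex and differentiable with (1/β)-Lipschitz continuous gradient, B an r×d real matrix, and 0 < γ ≤ β. Given x_k, w ∈ ℝ^d and v_{k+1} ∈ ℝ^r, define x_{k+1} = x_k − γw − γBᵀv_{k+1}. Then for every x ∈ ℝ^d: f(x_{k+1}) − f(x) ≤ ⟨w − ∇f(x_k), x − x_{k+1}⟩ + ⟨B(x − x_{k+1}), v_{k+1}⟩ + (1/(2γ))(‖x_k − x‖² − ‖x_{k+1} − x‖²). -/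
/-!
The descent lemma bounds `f x_{k+1}` by the linearisation of `f` at `x_k` plus
`‖x_{k+1} - x_k‖² / (2β)`, and convexity bounds `f x` below by the same linearisation. In the
difference the gradient terms combine to `⟪∇f(x_k), x_{k+1} - x⟫`; writing the update as
`x_k - x_{k+1} = γ (w + Bᵀv_{k+1})`, polarisation turns `⟪w + Bᵀv_{k+1}, x - x_{k+1}⟫` into the
difference of squared distances up to `‖x_{k+1} - x_k‖² / (2γ)`, which dominates the descent
term because `γ ≤ β`.
-/

open scoped RealInnerProductSpace
open Set AffineMap

theorem ConvexOn.add_fderiv_sub_le {E : Type*} [NormedAddCommGroup E] [NormedSpace ℝ E]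
    {s : Set E} {f : E → ℝ} {f' : E →L[ℝ] ℝ} {a b : E} (hf : ConvexOn ℝ s f)
    (ha : a ∈ s) (hb : b ∈ s) (hfa : HasFDerivAt f f' a) :
    f a + f' (b - a) ≤ f b := by
  let ℓ : ℝ →ᵃ[ℝ] E := lineMap a b
  have hderiv : HasDerivAt (f ∘ ℓ) (f' (b - a)) 0 := by
    have hℓ : HasDerivAt ℓ (b - a) 0 := hasDerivAt_lineMap
    exact (by simpa [ℓ] using hfa : HasFDerivAt f f' (ℓ 0)).comp_hasDerivAt 0 hℓ
  have := (hf.comp_affineMap ℓ).le_slope_of_hasDerivAt (by simpa [ℓ] using ha)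
    (by simpa [ℓ] using hb) zero_lt_one hderiv
  simp only [slope_def_field, ℓ, Function.comp_apply, lineMap_apply_zero, lineMap_apply_one,
    sub_zero, div_one] at this
  linarith

theorem le_add_fderiv_sub_add_sq_of_lipschitz {E : Type*} [NormedAddCommGroup E]
    [NormedSpace ℝ E] {f : E → ℝ} {f' : E → E →L[ℝ] ℝ} {L : ℝ}
    (hf : ∀ x, HasFDerivAt f (f' x) x) (hLip : ∀ x y, ‖f' x - f' y‖ ≤ L * ‖x - y‖) (a b : E) :
    f b ≤ f a + f' a (b - a) + L / 2 * ‖b - a‖ ^ 2 := by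
  set u := b - a
  have hderiv (t : ℝ) : HasDerivAt (fun t : ℝ => f (a + t • u)) (f' (a + t • u) u) t := by
    simpa [Function.comp_def] using
      (hf _).comp_hasDerivAt t (((hasDerivAt_id t).smul_const u).const_add a)
  have hbound (t : ℝ) (ht : 0 ≤ t) : f' (a + t • u) u ≤ f' a u + L * t * ‖u‖ ^ 2 := by
    calc f' (a + t • u) u = f' a u + (f' (a + t • u) - f' a) u := by simp
      _ ≤ f' a u + ‖f' (a + t • u) - f' a‖ * ‖u‖ := by
        gcongr; exact (le_abs_self _).trans ((f' (a + t • u) - f' a).le_opNorm u)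
      _ ≤ f' a u + L * ‖t • u‖ * ‖u‖ := by gcongr; simpa using hLip (a + t • u) a
      _ = f' a u + L * t * ‖u‖ ^ 2 := by rw [norm_smul, Real.norm_of_nonneg ht]; ring
  have hmodel (t : ℝ) : HasDerivAt (fun t : ℝ => f a + t * f' a u + L / 2 * t ^ 2 * ‖u‖ ^ 2)
      (f' a u + L * t * ‖u‖ ^ 2) t := by
    refine ((((hasDerivAt_id t).mul_const _).const_add (f a)).add
      (((hasDerivAt_pow 2 t).const_mul (L / 2)).mul_const _)).congr_deriv ?_
    simp only [Nat.cast_ofNat, Nat.add_one_sub_one, pow_one]; ring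
  -- `t ↦ f (a + t • u)` starts at its quadratic model and grows no faster on `[0, 1]`
  have := image_le_of_deriv_right_le_deriv_boundary (a := 0) (b := 1)
    (fun t _ => (hderiv t).continuousAt.continuousWithinAt) (fun t _ => (hderiv t).hasDerivWithinAt)
    (by simp) (fun t _ => (hmodel t).continuousAt.continuousWithinAt)
    (fun t _ => (hmodel t).hasDerivWithinAt)
    (fun t ht => hbound t ht.1) (right_mem_Icc.2 zero_le_one)
  simpa [u] using this

theorem inner_add_norm_sq_sub_norm_sq_of_eq_sub_smul {E : Type*} [NormedAddCommGroup E]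
    [InnerProductSpace ℝ E] {γ : ℝ} (hγ : γ ≠ 0) {s x₀ x₁ : E} (h : x₁ = x₀ - γ • s) (x : E) :
    ⟪s, x - x₁⟫ + 1 / (2 * γ) * (‖x₀ - x‖ ^ 2 - ‖x₁ - x‖ ^ 2) = 1 / (2 * γ) * ‖x₁ - x₀‖ ^ 2 := by
  have hs : s = γ⁻¹ • (x₀ - x₁) := by rw [h, sub_sub_cancel, inv_smul_smul₀ hγ]
  have hpolar := norm_sub_sq_real (x₀ - x₁) (x - x₁)
  rw [sub_sub_sub_cancel_right, ← norm_neg (x - x₁), neg_sub] at hpolar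
  rw [hs, real_inner_smul_left, ← norm_neg (x₁ - x₀), neg_sub, hpolar]
  field_simp
  ring

/-- the intermediate one-step primal estimate for the SVRG-PDFP
primal update `x_{k+1} = x_k − γw − γBᵀv_{k+1}`. -/
theorem stmt_5 {d r : ℕ}
    (f : EuclideanSpace ℝ (Fin d) → ℝ)
    (f' : EuclideanSpace ℝ (Fin d) → EuclideanSpace ℝ (Fin d))
    (hconv : ConvexOn ℝ Set.univ f)
    (hgrad : ∀ x, HasGradientAt f (f' x) x)
    (β : ℝ)
    (hLip : ∀ x y, ‖f' x - f' y‖ ≤ (1 / β) * ‖x - y‖)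
    (B : EuclideanSpace ℝ (Fin d) →L[ℝ] EuclideanSpace ℝ (Fin r))
    (γ : ℝ) (hγ0 : 0 < γ) (hγβ : γ ≤ β)
    (xk w : EuclideanSpace ℝ (Fin d)) (vk1 : EuclideanSpace ℝ (Fin r))
    (xk1 : EuclideanSpace ℝ (Fin d))
    (hxk1 : xk1 = xk - γ • w - γ • ContinuousLinearMap.adjoint B vk1) :
    ∀ x : EuclideanSpace ℝ (Fin d),
      f xk1 - f x
        ≤ ⟪w - f' xk, x - xk1⟫ + ⟪B (x - xk1), vk1⟫
          + (1 / (2 * γ)) * (‖xk - x‖ ^ 2 - ‖xk1 - x‖ ^ 2) := by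
  intro x
  let toDual := InnerProductSpace.toDual ℝ (EuclideanSpace ℝ (Fin d))
  have hfderiv (y) : HasFDerivAt f (toDual (f' y)) y := (hgrad y).hasFDerivAt
  have hdescent : f xk1 ≤ f xk + ⟪f' xk, xk1 - xk⟫ + 1 / β / 2 * ‖xk1 - xk‖ ^ 2 :=
    le_add_fderiv_sub_add_sq_of_lipschitz hfderiv
      (fun y z => by simpa only [← map_sub, LinearIsometryEquiv.norm_map] using hLip y z) xk xk1
  have hsupport : f xk + ⟪f' xk, x - xk⟫ ≤ f x :=
    hconv.add_fderiv_sub_le (mem_univ xk) (mem_univ x) (hfderiv xk)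
  have hstep : xk1 = xk - γ • (w + ContinuousLinearMap.adjoint B vk1) := by
    rw [hxk1, smul_add, sub_sub]
  have hthree := inner_add_norm_sq_sub_norm_sq_of_eq_sub_smul hγ0.ne' hstep x
  have hsplit : ⟪w - f' xk, x - xk1⟫ + ⟪B (x - xk1), vk1⟫
      = ⟪w + ContinuousLinearMap.adjoint B vk1, x - xk1⟫ + ⟪f' xk, xk1 - xk⟫ - ⟪f' xk, x - xk⟫ := by
    rw [inner_add_left, ContinuousLinearMap.adjoint_inner_left, real_inner_comm (B _)]
    simp only [inner_sub_left, inner_sub_right]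
    ring
  have hstep_size : 1 / β / 2 * ‖xk1 - xk‖ ^ 2 ≤ 1 / (2 * γ) * ‖xk1 - xk‖ ^ 2 := by
    rw [div_div, mul_comm β]; gcongr
  linarith
end

section
/- Let h : ℝ^r → ℝ ∪ {+∞} be proper convex lower semicontinuous, B an r×d real matrix, and γ, λ > 0 with λ·ρ_max(BBᵀ) ≤ 1, where ρ_max(BBᵀ) is the largest eigenvalue of BBᵀ. Set G = (γ/(2λ))(I − λBBᵀ) and ‖v‖_G² = ⟨v, Gv⟩. Given x_k, w ∈ ℝ^d and v_k ∈ ℝ^r, define y_{k+1} = x_k − γw − γBᵀv_k, let v_{k+1} be the unique minimizer over v ∈ ℝ^r of (λ/γ)h(v) + ½‖v − ((λ/γ)B y_{k+1} + v_k)‖², and define x_{k+1} = x_k − γw − γBᵀv_{k+1}. Then for every v with h(v) < +∞: h(v_{k+1}) − h(v) ≤ ⟨Bx_{k+1}, v_{k+1} − v⟩ + ‖v − v_k‖_G² − ‖v − v_{k+1}‖_G². -/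
/-!
Optimality of `v_{k+1}` for the strongly convex prox objective, tested along the segment towards
`v`, gives the variational inequality `(λ/γ)(h v_{k+1} - h v) ≤ ⟪p - v_{k+1}, v_{k+1} - v⟫` with
`p = (λ/γ) B y_{k+1} + v_k`. Since `y_{k+1} - x_{k+1} = γ Bᵀ(v_{k+1} - v_k)`, the right-hand side
is `(λ/γ)⟪B x_{k+1}, v_{k+1} - v⟫ - ⟪(I - λBBᵀ)(v_{k+1} - v_k), v_{k+1} - v⟫`, and the three-point
identity for the seminorm of `I - λBBᵀ` bounds the last term by a difference of `G`-seminorms,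
dropping `-‖v_{k+1} - v_k‖_G² ≤ 0`.
-/

open scoped RealInnerProductSpace
open Filter Topology

section
variable {E F : Type*} [NormedAddCommGroup E] [InnerProductSpace ℝ E]
  [NormedAddCommGroup F] [InnerProductSpace ℝ F]

theorem ConvexOn.sub_le_inner_add_mul_of_isMinOn_prox {S : Set E} {f : E → ℝ}
    (hf : ConvexOn ℝ S f) {p x v : E} (hx : x ∈ S) (hv : v ∈ S)
    (hmin : IsMinOn (fun u ↦ f u + 1 / 2 * ‖u - p‖ ^ 2) S x) {t : ℝ} (ht0 : 0 < t)
    (ht1 : t ≤ 1) :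
    f x - f v ≤ ⟪p - x, x - v⟫ + t * (1 / 2 * ‖v - x‖ ^ 2) := by
  have hconv := hf.2 hx hv (sub_nonneg.2 ht1) ht0.le (sub_add_cancel 1 t)
  have hmin_t := isMinOn_iff.1 hmin _ (hf.1 hx hv (sub_nonneg.2 ht1) ht0.le (sub_add_cancel 1 t))
  have hnorm : ‖(1 - t) • x + t • v - p‖ ^ 2
      = ‖x - p‖ ^ 2 + 2 * (t * ⟪p - x, x - v⟫) + t ^ 2 * ‖v - x‖ ^ 2 := by
    rw [show (1 - t) • x + t • v - p = (x - p) + t • (v - x) by module, norm_add_sq_real,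
      real_inner_smul_right, norm_smul, Real.norm_eq_abs, mul_pow, sq_abs,
      ← inner_neg_neg, neg_sub, neg_sub]
  simp only [smul_eq_mul] at hconv hmin_t
  nlinarith

theorem ConvexOn.sub_le_inner_of_isMinOn_prox {S : Set E} {f : E → ℝ}
    (hf : ConvexOn ℝ S f) {p x v : E} (hx : x ∈ S) (hv : v ∈ S)
    (hmin : IsMinOn (fun u ↦ f u + 1 / 2 * ‖u - p‖ ^ 2) S x) :
    f x - f v ≤ ⟪p - x, x - v⟫ := by
  have hcont : Continuous fun t : ℝ ↦ ⟪p - x, x - v⟫ + t * (1 / 2 * ‖v - x‖ ^ 2) := by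
    fun_prop
  have hlim := (hcont.tendsto' 0 ⟪p - x, x - v⟫ (by simp)).mono_left
    (nhdsWithin_le_nhds (s := Set.Ioi 0))
  refine ge_of_tendsto hlim ?_
  filter_upwards [Ioc_mem_nhdsGT one_pos] with t ht
  exact hf.sub_le_inner_add_mul_of_isMinOn_prox hx hv hmin ht.1 ht.2

theorem norm_sub_sq_eq_add_two_inner_add (a b c : E) :
    ‖c - b‖ ^ 2 = ‖c - a‖ ^ 2 + 2 * ⟪b - a, a - c⟫ + ‖b - a‖ ^ 2 := by
  rw [show c - b = (c - a) - (b - a) by abel, norm_sub_sq_real, real_inner_comm,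
    ← neg_sub a c, inner_neg_right, norm_neg]
  ring

theorem inner_sub_mul_inner_le_of_forall_mul_norm_sq_le {T : E →L[ℝ] F} {lam : ℝ}
    (hT : ∀ u, lam * ‖T u‖ ^ 2 ≤ ‖u‖ ^ 2) (a b c : E) :
    ⟪b - a, a - c⟫ - lam * ⟪T (b - a), T (a - c)⟫
      ≤ ((‖c - b‖ ^ 2 - lam * ‖T (c - b)‖ ^ 2) - (‖c - a‖ ^ 2 - lam * ‖T (c - a)‖ ^ 2)) / 2 := by
  have hT_three := norm_sub_sq_eq_add_two_inner_add (T a) (T b) (T c)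
  simp only [← map_sub] at hT_three
  rw [norm_sub_sq_eq_add_two_inner_add a b c, hT_three]
  linarith [hT (b - a)]

end

/- `h` is modelled by a real-valued function on its effective domain `S`, and
`‖u‖_G² = (γ/(2λ))(‖u‖² - λ‖Bᵀu‖²)`. -/
theorem stmt_6_general {d r : ℕ}
    (S : Set (EuclideanSpace ℝ (Fin r)))
    (h : EuclideanSpace ℝ (Fin r) → ℝ)
    (hhconv : ConvexOn ℝ S h)
    (B : EuclideanSpace ℝ (Fin d) →L[ℝ] EuclideanSpace ℝ (Fin r))
    (γ lam : ℝ) (hγ0 : 0 < γ) (hlam0 : 0 < lam)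
    (hρmax : ∀ u : EuclideanSpace ℝ (Fin r),
      lam * ‖ContinuousLinearMap.adjoint B u‖ ^ 2 ≤ ‖u‖ ^ 2)
    (xk w : EuclideanSpace ℝ (Fin d)) (vk : EuclideanSpace ℝ (Fin r))
    (yk1 : EuclideanSpace ℝ (Fin d))
    (hyk1 : yk1 = xk - γ • w - γ • ContinuousLinearMap.adjoint B vk)
    (vk1 : EuclideanSpace ℝ (Fin r))
    (hvk1mem : vk1 ∈ S)
    (hvk1min : ∀ u ∈ S,
      (lam / γ) * h vk1 + (1 / 2) * ‖vk1 - ((lam / γ) • B yk1 + vk)‖ ^ 2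
        ≤ (lam / γ) * h u + (1 / 2) * ‖u - ((lam / γ) • B yk1 + vk)‖ ^ 2)
    (xk1 : EuclideanSpace ℝ (Fin d))
    (hxk1 : xk1 = xk - γ • w - γ • ContinuousLinearMap.adjoint B vk1) :
    ∀ v ∈ S,
      h vk1 - h v
        ≤ ⟪B xk1, vk1 - v⟫
          + (γ / (2 * lam)) * (‖v - vk‖ ^ 2
              - lam * ‖ContinuousLinearMap.adjoint B (v - vk)‖ ^ 2)
          - (γ / (2 * lam)) * (‖v - vk1‖ ^ 2
              - lam * ‖ContinuousLinearMap.adjoint B (v - vk1)‖ ^ 2) := by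
  intro v hv
  set A := ContinuousLinearMap.adjoint B
  have hprox := (hhconv.smul (div_pos hlam0 hγ0).le).sub_le_inner_of_isMinOn_prox hvk1mem hv
    (isMinOn_iff.2 hvk1min)
  simp only [smul_eq_mul] at hprox
  have hy : yk1 = xk1 - γ • A (vk - vk1) := by
    rw [hyk1, hxk1, map_sub]
    module
  have hsplit : ⟪(lam / γ) • B yk1 + vk - vk1, vk1 - v⟫
      = (lam / γ) * ⟪B xk1, vk1 - v⟫
        + (⟪vk - vk1, vk1 - v⟫ - lam * ⟪A (vk - vk1), A (vk1 - v)⟫) := by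
    rw [hy, map_sub, map_smul, smul_sub, smul_smul, div_mul_cancel₀ _ hγ0.ne', add_sub_assoc,
      inner_add_left, inner_sub_left, real_inner_smul_left, real_inner_smul_left,
      ← ContinuousLinearMap.adjoint_inner_right B (A (vk - vk1))]
    ring
  have hthree := inner_sub_mul_inner_le_of_forall_mul_norm_sq_le hρmax vk1 vk v
  calc h vk1 - h v = (γ / lam) * ((lam / γ) * h vk1 - (lam / γ) * h v) := by
        field_simp
    _ ≤ (γ / lam) * ((lam / γ) * ⟪B xk1, vk1 - v⟫ + ((‖v - vk‖ ^ 2 - lam * ‖A (v - vk)‖ ^ 2)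
          - (‖v - vk1‖ ^ 2 - lam * ‖A (v - vk1)‖ ^ 2)) / 2) := by
        gcongr
        linarith
    _ = _ := by
        field_simp
        ring

/-- the one-step dual estimate (Lemma 3 of the paper) for the
PDFP dual update `v_{k+1} = Prox_{(λ/γ)h}((λ/γ)B y_{k+1} + v_k)`.
The extended-real-valued proper convex l.s.c. function `h` is modelled by a
real-valued function on its effective domain `S` (so `h v < +∞` means `v ∈ S`),
and the prox is the (unique) minimizer over `S`. The condition
`λ·ρ_max(BBᵀ) ≤ 1` is expressed as `λ‖Bᵀu‖² ≤ ‖u‖²` for all `u`, and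
`‖u‖_G² = ⟨u, Gu⟩ = (γ/(2λ))(‖u‖² − λ‖Bᵀu‖²)` for `G = (γ/(2λ))(I − λBBᵀ)`. -/
theorem stmt_6 {d r : ℕ}
    (S : Set (EuclideanSpace ℝ (Fin r)))
    (h : EuclideanSpace ℝ (Fin r) → ℝ)
    (hS : S.Nonempty) (hhconv : ConvexOn ℝ S h)
    (hlsc : LowerSemicontinuousOn h S)
    (B : EuclideanSpace ℝ (Fin d) →L[ℝ] EuclideanSpace ℝ (Fin r))
    (γ lam : ℝ) (hγ0 : 0 < γ) (hlam0 : 0 < lam)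
    (hρmax : ∀ u : EuclideanSpace ℝ (Fin r),
      lam * ‖ContinuousLinearMap.adjoint B u‖ ^ 2 ≤ ‖u‖ ^ 2)
    (xk w : EuclideanSpace ℝ (Fin d)) (vk : EuclideanSpace ℝ (Fin r))
    (yk1 : EuclideanSpace ℝ (Fin d))
    (hyk1 : yk1 = xk - γ • w - γ • ContinuousLinearMap.adjoint B vk)
    (vk1 : EuclideanSpace ℝ (Fin r))
    (hvk1mem : vk1 ∈ S)
    (hvk1min : ∀ u ∈ S,
      (lam / γ) * h vk1 + (1 / 2) * ‖vk1 - ((lam / γ) • B yk1 + vk)‖ ^ 2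
        ≤ (lam / γ) * h u + (1 / 2) * ‖u - ((lam / γ) • B yk1 + vk)‖ ^ 2)
    (hvk1uniq : ∀ u ∈ S,
      (∀ u' ∈ S,
        (lam / γ) * h u + (1 / 2) * ‖u - ((lam / γ) • B yk1 + vk)‖ ^ 2
          ≤ (lam / γ) * h u' + (1 / 2) * ‖u' - ((lam / γ) • B yk1 + vk)‖ ^ 2) →
      u = vk1)
    (xk1 : EuclideanSpace ℝ (Fin d))
    (hxk1 : xk1 = xk - γ • w - γ • ContinuousLinearMap.adjoint B vk1) :
    ∀ v ∈ S,
      h vk1 - h v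
        ≤ ⟪B xk1, vk1 - v⟫
          + (γ / (2 * lam)) * (‖v - vk‖ ^ 2
              - lam * ‖ContinuousLinearMap.adjoint B (v - vk)‖ ^ 2)
          - (γ / (2 * lam)) * (‖v - vk1‖ ^ 2
              - lam * ‖ContinuousLinearMap.adjoint B (v - vk1)‖ ^ 2) :=
  stmt_6_general S h hhconv B γ lam hγ0 hlam0 hρmax xk w vk yk1 hyk1 vk1 hvk1mem hvk1min xk1 hxk1
end

section
/- Let f : ℝ^d → ℝ be convex and differentiable with (1/β)-Lipschitz continuous gradient, B an r×d real matrix, h : ℝ^r → ℝ ∪ {+∞} proper convex lower semicontinuous, 0 < γ ≤ β, and 0 < λ ≤ 1/ρ_max(BBᵀ); set G = (γ/(2λ))(I − λBBᵀ) and ‖v‖_G² = ⟨v, Gv⟩. Suppose (x*, v*) satisfies ∇f(x*) + Bᵀv* = 0 and h(v) − h(v*) − ⟨Bx*, v − v*⟩ ≥ 0 for all v ∈ ℝ^r. Given x_k, w ∈ ℝ^d and v_k ∈ ℝ^r, define e = w − ∇f(x_k), y_{k+1} = x_k − γw − γBᵀv_k, v_{k+1} = the unique minimizer over v of (λ/γ)h(v)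 + ½‖v − ((λ/γ)B y_{k+1} + v_k)‖², x_{k+1} = x_k − γw − γBᵀv_{k+1}, and x̄_k = x_k − γ∇f(x_k) − γBᵀv_{k+1}. Then 2γ R(x_{k+1}, v_{k+1}) ≤ ‖x_k − x*‖² − ‖x_{k+1} − x*‖² + 2γ‖v_k − v*‖_G² − 2γ‖v_{k+1} − v*‖_G² + 2γ²‖e‖² − 2γ⟨e, x̄_k − x*⟩, where R(x, v) = f(x) − f(x*) − ⟨∇f(x*), x − x*⟩ + h(v) − h(v*) − ⟨Bx*, v − v*⟩. -/
/-!
The primal update is an inexact forward step: convexity of `f` at `x*` together with the descent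
lemma at `x_k` gives `f x_{k+1} - f x* ≤ ⟪∇f x_k, x_{k+1} - x*⟫ + ‖x_{k+1} - x_k‖² / (2β)`, and
`γ ∇f x_k` is read off the update. The dual update is a proximal step, and the variational
inequality of the prox bounds `h v_{k+1} - h v*`. Adding the two estimates, the coupling terms
`⟪B (x_{k+1} - x*), v_{k+1} - v*⟫` cancel, three-point identities turn the remaining inner
products into differences of squared norms, and what is left over,
`-(1 - γ/β) ‖x_{k+1} - x_k‖²` and `-(γ²/λ) (‖v_{k+1} - v_k‖² - λ ‖Bᵀ(v_{k+1} - v_k)‖²)`,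
is nonpositive because `γ ≤ β` and `λ ρ_max(BBᵀ) ≤ 1`.
-/

open scoped RealInnerProductSpace
open Set Filter Topology AffineMap ContinuousLinearMap
open scoped InnerProduct

variable {E F : Type*} [NormedAddCommGroup E] [InnerProductSpace ℝ E]
  [NormedAddCommGroup F] [InnerProductSpace ℝ F]

theorem two_mul_real_inner_sub_sub (a b c : F) :
    2 * ⟪a - b, a - c⟫ = ‖a - b‖ ^ 2 + ‖a - c‖ ^ 2 - ‖b - c‖ ^ 2 := by
  rw [show b - c = (a - c) - (a - b) by abel, norm_sub_sq_real (a - c), real_inner_comm]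
  ring

theorem ConvexOn.inner_sub_le_sub_of_isMinOn {S : Set F} {h : F → ℝ} {c z u : F}
    (hh : ConvexOn ℝ S h) (hz : z ∈ S) (hu : u ∈ S)
    (hmin : IsMinOn (fun p => h p + 1 / 2 * ‖p - c‖ ^ 2) S z) :
    ⟪c - z, u - z⟫ ≤ h u - h z := by
  have hsmall : ∀ t ∈ Ioc (0 : ℝ) 1, ⟪c - z, u - z⟫ ≤ h u - h z + t / 2 * ‖u - z‖ ^ 2 := by
    intro t ⟨ht0, ht1⟩
    have hzt : (1 - t) • z + t • u = z + t • (u - z) := by module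
    have hconv := hh.2 hz hu (sub_nonneg.2 ht1) ht0.le (by ring)
    have hmin_t := isMinOn_iff.1 hmin _ (hh.1 hz hu (sub_nonneg.2 ht1) ht0.le (by ring))
    rw [hzt] at hconv hmin_t
    have hexpand : ‖z + t • (u - z) - c‖ ^ 2
        = ‖z - c‖ ^ 2 - 2 * t * ⟪c - z, u - z⟫ + t ^ 2 * ‖u - z‖ ^ 2 := by
      rw [show z + t • (u - z) - c = (z - c) + t • (u - z) by abel, norm_add_sq_real,
        inner_smul_right, norm_smul, Real.norm_of_nonneg ht0.le, ← neg_sub c z, inner_neg_left]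
      ring
    simp only [smul_eq_mul] at hconv
    rw [hexpand] at hmin_t
    have : t * ⟪c - z, u - z⟫ ≤ t * (h u - h z + t / 2 * ‖u - z‖ ^ 2) := by nlinarith
    exact le_of_mul_le_mul_left this ht0
  have hlim : Tendsto (fun t : ℝ => h u - h z + t / 2 * ‖u - z‖ ^ 2) (𝓝[>] 0)
      (𝓝 (h u - h z)) := by
    have : Continuous (fun t : ℝ => h u - h z + t / 2 * ‖u - z‖ ^ 2) := by fun_prop
    simpa using (this.tendsto 0).mono_left nhdsWithin_le_nhds
  exact ge_of_tendsto hlim (by filter_upwards [Ioc_mem_nhdsGT zero_lt_one] using hsmall)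

variable [CompleteSpace E]

theorem HasGradientAt.hasDerivAt_comp_lineMap_s7 {f : E → ℝ} {g x y : E} {t : ℝ}
    (hf : HasGradientAt f g (lineMap x y t)) :
    HasDerivAt (fun s => f (lineMap x y s)) ⟪g, y - x⟫ t := by
  have h := (hasGradientAt_iff_hasFDerivAt.mp hf).comp_hasDerivAt t hasDerivAt_lineMap
  simp only [Function.comp_def, InnerProductSpace.toDual_apply_apply] at h
  exact h

theorem ConvexOn.add_inner_le_of_hasGradientAt {s : Set E} {f : E → ℝ} {g x y : E}
    (hf : ConvexOn ℝ s f) (hx : x ∈ s) (hy : y ∈ s) (hg : HasGradientAt f g x) :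
    f x + ⟪g, y - x⟫ ≤ f y := by
  have hd : HasDerivAt (fun t : ℝ => f (lineMap x y t)) ⟪g, y - x⟫ 0 :=
    HasGradientAt.hasDerivAt_comp_lineMap_s7 (by simpa using hg)
  have := (hf.comp_affineMap (lineMap (k := ℝ) x y)).le_slope_of_hasDerivAt
    (by simpa using hx) (by simpa using hy) zero_lt_one hd
  simp only [Function.comp_apply, lineMap_apply_zero, lineMap_apply_one, slope_def_field,
    sub_zero, div_one] at this
  linarith

theorem le_add_inner_add_of_lipschitz_gradient {f : E → ℝ} {f' : E → E} {L : ℝ}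
    (hg : ∀ x, HasGradientAt f (f' x) x) (hL : ∀ x y, ‖f' x - f' y‖ ≤ L * ‖x - y‖) (x y : E) :
    f y ≤ f x + ⟪f' x, y - x⟫ + L / 2 * ‖y - x‖ ^ 2 := by
  have hφ (t : ℝ) : HasDerivAt (fun s => f (lineMap x y s)) ⟪f' (lineMap x y t), y - x⟫ t :=
    (hg _).hasDerivAt_comp_lineMap_s7
  have hbound : ∀ t ∈ Ico (0 : ℝ) 1,
      ⟪f' (lineMap x y t), y - x⟫ ≤ ⟪f' x, y - x⟫ + L * t * ‖y - x‖ ^ 2 := by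
    intro t ht
    have hdist : ‖lineMap x y t - x‖ = t * ‖y - x‖ := by
      rw [← dist_eq_norm, dist_lineMap_left, Real.norm_of_nonneg ht.1, dist_comm, dist_eq_norm]
    calc ⟪f' (lineMap x y t), y - x⟫
        = ⟪f' x, y - x⟫ + ⟪f' (lineMap x y t) - f' x, y - x⟫ := by rw [inner_sub_left]; ring
      _ ≤ ⟪f' x, y - x⟫ + ‖f' (lineMap x y t) - f' x‖ * ‖y - x‖ := by
          gcongr; exact real_inner_le_norm _ _
      _ ≤ ⟪f' x, y - x⟫ + L * (t * ‖y - x‖) * ‖y - x‖ := by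
          gcongr; rw [← hdist]; exact hL _ _
      _ = ⟪f' x, y - x⟫ + L * t * ‖y - x‖ ^ 2 := by ring
  have hB (t : ℝ) : HasDerivAt (fun s => f x + s * ⟪f' x, y - x⟫ + L / 2 * s ^ 2 * ‖y - x‖ ^ 2)
      (⟪f' x, y - x⟫ + L * t * ‖y - x‖ ^ 2) t := by
    have := (((hasDerivAt_id' t).mul_const ⟪f' x, y - x⟫).const_add (f x)).add
      (((hasDerivAt_pow 2 t).const_mul (L / 2)).mul_const (‖y - x‖ ^ 2))
    exact this.congr_deriv (by simp only [Nat.cast_ofNat, Nat.add_one_sub_one, pow_one]; ring)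
  have := image_le_of_deriv_right_le_deriv_boundary
    (fun t _ => (hφ t).continuousAt.continuousWithinAt) (fun t _ => (hφ t).hasDerivWithinAt)
    (by simp) (fun t _ => (hB t).continuousAt.continuousWithinAt)
    (fun t _ => (hB t).hasDerivWithinAt) hbound (right_mem_Icc.2 zero_le_one)
  simpa using this

theorem ConvexOn.sub_le_inner_add_of_lipschitz_gradient {f : E → ℝ} {f' : E → E} {L : ℝ}
    (hf : ConvexOn ℝ univ f) (hg : ∀ x, HasGradientAt f (f' x) x)
    (hL : ∀ x y, ‖f' x - f' y‖ ≤ L * ‖x - y‖) (x y z : E) :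
    f z - f y ≤ ⟪f' x, z - y⟫ + L / 2 * ‖z - x‖ ^ 2 := by
  have hxy := hf.add_inner_le_of_hasGradientAt (mem_univ x) (mem_univ y) (hg x)
  have hxz := le_add_inner_add_of_lipschitz_gradient hg hL x z
  have : ⟪f' x, z - y⟫ = ⟪f' x, z - x⟫ - ⟪f' x, y - x⟫ := by
    rw [← inner_sub_right, sub_sub_sub_cancel_right]
  linarith

variable [CompleteSpace F]

theorem pdfp_primal_step (B : E →L[ℝ] F) {f : E → ℝ} {f' : E → E} {L γ : ℝ}
    (hf : ConvexOn ℝ univ f) (hg : ∀ x, HasGradientAt f (f' x) x)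
    (hL : ∀ x y, ‖f' x - f' y‖ ≤ L * ‖x - y‖) (hγ : 0 ≤ γ) {x w x' xs : E} {v' vs : F}
    (hopt : f' xs + (B†) vs = 0) (hx' : x' = x - γ • w - γ • (B†) v') :
    2 * γ * (f x' - f xs - ⟪f' xs, x' - xs⟫)
      ≤ ‖x - xs‖ ^ 2 - ‖x' - xs‖ ^ 2 - (1 - γ * L) * ‖x' - x‖ ^ 2
        - 2 * γ * ⟪w - f' x, x' - xs⟫ - 2 * γ * ⟪B (x' - xs), v' - vs⟫ := by
  have hthree := hf.sub_le_inner_add_of_lipschitz_gradient hg hL x xs x'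
  have hgrad_x : γ • f' x = (x - x') - γ • (w - f' x) - γ • (B†) v' := by rw [hx']; module
  have hgrad_xs : f' xs = -(B†) vs := eq_neg_of_add_eq_zero_left hopt
  have hinner : γ * ⟪f' x, x' - xs⟫
      = ⟪x - x', x' - xs⟫ - γ * ⟪w - f' x, x' - xs⟫ - γ * ⟪(B†) v', x' - xs⟫ := by
    rw [← real_inner_smul_left, hgrad_x, inner_sub_left, inner_sub_left, real_inner_smul_left,
      real_inner_smul_left]
  have hadj : ⟪(B†) v', x' - xs⟫ - ⟪(B†) vs, x' - xs⟫ = ⟪B (x' - xs), v' - vs⟫ := by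
    rw [← inner_sub_left, ← map_sub, adjoint_inner_left, real_inner_comm]
  have hpolar := two_mul_real_inner_sub_sub x' x xs
  rw [hgrad_xs, inner_neg_left]
  rw [show x - x' = -(x' - x) by abel, inner_neg_left] at hinner
  linear_combination 2 * mul_le_mul_of_nonneg_left hthree hγ + 2 * hinner - 2 * γ * hadj - hpolar

theorem pdfp_dual_step (B : E →L[ℝ] F) {S : Set F} {h : F → ℝ} {γ lam : ℝ}
    (hh : ConvexOn ℝ S h) (hγ : 0 < γ) (hlam : 0 < lam) {x' y : E} {v v' u : F}
    (hv' : v' ∈ S) (hu : u ∈ S)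
    (hmin : ∀ p ∈ S, lam / γ * h v' + 1 / 2 * ‖v' - ((lam / γ) • B y + v)‖ ^ 2
      ≤ lam / γ * h p + 1 / 2 * ‖p - ((lam / γ) • B y + v)‖ ^ 2)
    (hy : y = x' + γ • (B†) (v' - v)) :
    2 * γ * (h v' - h u)
      ≤ γ ^ 2 / lam * (‖v - u‖ ^ 2 - lam * ‖(B†) (v - u)‖ ^ 2)
        - γ ^ 2 / lam * (‖v' - u‖ ^ 2 - lam * ‖(B†) (v' - u)‖ ^ 2)
        - γ ^ 2 / lam * (‖v' - v‖ ^ 2 - lam * ‖(B†) (v' - v)‖ ^ 2)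
        + 2 * γ * ⟪B x', v' - u⟫ := by
  have hvi := ((hh.smul (div_pos hlam hγ).le : ConvexOn ℝ S fun p => lam / γ * h p)
    ).inner_sub_le_sub_of_isMinOn hv' hu (isMinOn_iff.2 hmin)
  simp only [smul_eq_mul] at hvi
  have hc : ⟪(lam / γ) • B y + v - v', u - v'⟫
      = -(lam / γ * ⟪B x', v' - u⟫) - lam * ⟪(B†) (v' - v), (B†) (v' - u)⟫ + ⟪v' - v, v' - u⟫ := by
    rw [hy, map_add, map_smul, ← neg_sub v' u, add_sub_assoc, ← neg_sub v' v, inner_add_left,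
      real_inner_smul_left, inner_add_left, real_inner_smul_left,
      ← adjoint_inner_right B ((B†) (v' - v)), map_neg]
    simp only [inner_neg_left, inner_neg_right]
    field_simp
    ring
  have hv := two_mul_real_inner_sub_sub v' v u
  have hBv := two_mul_real_inner_sub_sub ((B†) v') ((B†) v) ((B†) u)
  simp only [← map_sub] at hBv
  rw [hc] at hvi
  linear_combination (norm := skip) (2 * γ ^ 2 / lam) * hvi - (γ ^ 2 / lam) * hv + γ ^ 2 * hBv
  apply le_of_eq
  field_simp
  ring

-- `h` is modelled by its restriction to its effective domain `S`, `λ ≤ 1/ρ_max(BBᵀ)` by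
-- `λ ‖Bᵀu‖² ≤ ‖u‖²`, and `2γ ‖u‖_G²` appears as `2γ ((γ / (2λ)) (‖u‖² - λ ‖Bᵀu‖²))`.
theorem stmt_7_general {d r : ℕ}
    (f : EuclideanSpace ℝ (Fin d) → ℝ)
    (f' : EuclideanSpace ℝ (Fin d) → EuclideanSpace ℝ (Fin d))
    (hconv : ConvexOn ℝ Set.univ f)
    (hgrad : ∀ x, HasGradientAt f (f' x) x)
    (β : ℝ)
    (hLip : ∀ x y, ‖f' x - f' y‖ ≤ (1 / β) * ‖x - y‖)
    (B : EuclideanSpace ℝ (Fin d) →L[ℝ] EuclideanSpace ℝ (Fin r))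
    (S : Set (EuclideanSpace ℝ (Fin r)))
    (h : EuclideanSpace ℝ (Fin r) → ℝ)
    (hhconv : ConvexOn ℝ S h)
    (γ lam : ℝ) (hγ0 : 0 < γ) (hγβ : γ ≤ β) (hlam0 : 0 < lam)
    (hρmax : ∀ u : EuclideanSpace ℝ (Fin r),
      lam * ‖ContinuousLinearMap.adjoint B u‖ ^ 2 ≤ ‖u‖ ^ 2)
    (xstar : EuclideanSpace ℝ (Fin d)) (vstar : EuclideanSpace ℝ (Fin r))
    (hvstar : vstar ∈ S)
    (hopt1 : f' xstar + ContinuousLinearMap.adjoint B vstar = 0)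
    (xk w : EuclideanSpace ℝ (Fin d)) (vk : EuclideanSpace ℝ (Fin r))
    (e : EuclideanSpace ℝ (Fin d)) (he : e = w - f' xk)
    (yk1 : EuclideanSpace ℝ (Fin d))
    (hyk1 : yk1 = xk - γ • w - γ • ContinuousLinearMap.adjoint B vk)
    (vk1 : EuclideanSpace ℝ (Fin r))
    (hvk1mem : vk1 ∈ S)
    (hvk1min : ∀ u ∈ S,
      (lam / γ) * h vk1 + (1 / 2) * ‖vk1 - ((lam / γ) • B yk1 + vk)‖ ^ 2
        ≤ (lam / γ) * h u + (1 / 2) * ‖u - ((lam / γ) • B yk1 + vk)‖ ^ 2)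
    (xk1 : EuclideanSpace ℝ (Fin d))
    (hxk1 : xk1 = xk - γ • w - γ • ContinuousLinearMap.adjoint B vk1)
    (xbar : EuclideanSpace ℝ (Fin d))
    (hxbar : xbar = xk - γ • f' xk - γ • ContinuousLinearMap.adjoint B vk1) :
    2 * γ * ((f xk1 - f xstar - ⟪f' xstar, xk1 - xstar⟫)
        + (h vk1 - h vstar - ⟪B xstar, vk1 - vstar⟫))
      ≤ ‖xk - xstar‖ ^ 2 - ‖xk1 - xstar‖ ^ 2
        + 2 * γ * ((γ / (2 * lam)) * (‖vk - vstar‖ ^ 2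
            - lam * ‖ContinuousLinearMap.adjoint B (vk - vstar)‖ ^ 2))
        - 2 * γ * ((γ / (2 * lam)) * (‖vk1 - vstar‖ ^ 2
            - lam * ‖ContinuousLinearMap.adjoint B (vk1 - vstar)‖ ^ 2))
        + 2 * γ ^ 2 * ‖e‖ ^ 2
        - 2 * γ * ⟪e, xbar - xstar⟫ := by
  have hβ : 0 < β := hγ0.trans_le hγβ
  have hy : yk1 = xk1 + γ • (B†) (vk1 - vk) := by rw [hyk1, hxk1, map_sub]; module
  have hprimal := pdfp_primal_step B hconv hgrad hLip hγ0.le hopt1 hxk1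
  have hdual := pdfp_dual_step B hhconv hγ0 hlam0 hvk1mem hvstar hvk1min hy
  have hprimal_slack : 0 ≤ (1 - γ * (1 / β)) * ‖xk1 - xk‖ ^ 2 := by
    have : γ * (1 / β) ≤ 1 := by rw [mul_one_div]; exact (div_le_one hβ).2 hγβ
    exact mul_nonneg (sub_nonneg.2 this) (sq_nonneg _)
  have hdual_slack : 0 ≤ γ ^ 2 / lam * (‖vk1 - vk‖ ^ 2 - lam * ‖(B†) (vk1 - vk)‖ ^ 2) :=
    mul_nonneg (by positivity) (sub_nonneg.2 (hρmax _))
  have herr : ⟪e, xbar - xstar⟫ = ⟪e, xk1 - xstar⟫ + γ * ‖e‖ ^ 2 := by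
    rw [show xbar - xstar = (xk1 - xstar) + γ • e by rw [hxbar, hxk1, he]; module,
      inner_add_right, real_inner_smul_right, real_inner_self_eq_norm_sq]
  have hcross : ⟪B (xk1 - xstar), vk1 - vstar⟫ = ⟪B xk1, vk1 - vstar⟫ - ⟪B xstar, vk1 - vstar⟫ := by
    rw [map_sub, inner_sub_left]
  have hG (X : ℝ) : 2 * γ * (γ / (2 * lam) * X) = γ ^ 2 / lam * X := by field_simp
  rw [hG, hG, herr]
  rw [← he] at hprimal
  linear_combination hprimal + hdual + hprimal_slack + hdual_slack - 2 * γ * hcross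

/-- the deterministic one-step estimate for an SVRG-PDFP step with
inexact gradient `w` (error `e = w − ∇f(x_k)`), at a saddle point `(x*, v*)`:
`2γ R(x_{k+1}, v_{k+1}) ≤ ‖x_k − x*‖² − ‖x_{k+1} − x*‖² + 2γ‖v_k − v*‖_G²
  − 2γ‖v_{k+1} − v*‖_G² + 2γ²‖e‖² − 2γ⟨e, x̄_k − x*⟩`.
Here `h` (the conjugate `g*`) is modelled by a real-valued function on its
effective domain `S`, `λ ≤ 1/ρ_max(BBᵀ)` is expressed as `λ‖Bᵀu‖² ≤ ‖u‖²`, and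
`‖u‖_G² = (γ/(2λ))(‖u‖² − λ‖Bᵀu‖²)` for `G = (γ/(2λ))(I − λBBᵀ)`. -/
theorem stmt_7 {d r : ℕ}
    (f : EuclideanSpace ℝ (Fin d) → ℝ)
    (f' : EuclideanSpace ℝ (Fin d) → EuclideanSpace ℝ (Fin d))
    (hconv : ConvexOn ℝ Set.univ f)
    (hgrad : ∀ x, HasGradientAt f (f' x) x)
    (β : ℝ)
    (hLip : ∀ x y, ‖f' x - f' y‖ ≤ (1 / β) * ‖x - y‖)
    (B : EuclideanSpace ℝ (Fin d) →L[ℝ] EuclideanSpace ℝ (Fin r))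
    (S : Set (EuclideanSpace ℝ (Fin r)))
    (h : EuclideanSpace ℝ (Fin r) → ℝ)
    (hS : S.Nonempty) (hhconv : ConvexOn ℝ S h)
    (hlsc : LowerSemicontinuousOn h S)
    (γ lam : ℝ) (hγ0 : 0 < γ) (hγβ : γ ≤ β) (hlam0 : 0 < lam)
    (hρmax : ∀ u : EuclideanSpace ℝ (Fin r),
      lam * ‖ContinuousLinearMap.adjoint B u‖ ^ 2 ≤ ‖u‖ ^ 2)
    (xstar : EuclideanSpace ℝ (Fin d)) (vstar : EuclideanSpace ℝ (Fin r))
    (hvstar : vstar ∈ S)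
    (hopt1 : f' xstar + ContinuousLinearMap.adjoint B vstar = 0)
    (hopt2 : ∀ v ∈ S, h v - h vstar - ⟪B xstar, v - vstar⟫ ≥ 0)
    (xk w : EuclideanSpace ℝ (Fin d)) (vk : EuclideanSpace ℝ (Fin r))
    (e : EuclideanSpace ℝ (Fin d)) (he : e = w - f' xk)
    (yk1 : EuclideanSpace ℝ (Fin d))
    (hyk1 : yk1 = xk - γ • w - γ • ContinuousLinearMap.adjoint B vk)
    (vk1 : EuclideanSpace ℝ (Fin r))
    (hvk1mem : vk1 ∈ S)
    (hvk1min : ∀ u ∈ S,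
      (lam / γ) * h vk1 + (1 / 2) * ‖vk1 - ((lam / γ) • B yk1 + vk)‖ ^ 2
        ≤ (lam / γ) * h u + (1 / 2) * ‖u - ((lam / γ) • B yk1 + vk)‖ ^ 2)
    (xk1 : EuclideanSpace ℝ (Fin d))
    (hxk1 : xk1 = xk - γ • w - γ • ContinuousLinearMap.adjoint B vk1)
    (xbar : EuclideanSpace ℝ (Fin d))
    (hxbar : xbar = xk - γ • f' xk - γ • ContinuousLinearMap.adjoint B vk1) :
    2 * γ * ((f xk1 - f xstar - ⟪f' xstar, xk1 - xstar⟫)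
        + (h vk1 - h vstar - ⟪B xstar, vk1 - vstar⟫))
      ≤ ‖xk - xstar‖ ^ 2 - ‖xk1 - xstar‖ ^ 2
        + 2 * γ * ((γ / (2 * lam)) * (‖vk - vstar‖ ^ 2
            - lam * ‖ContinuousLinearMap.adjoint B (vk - vstar)‖ ^ 2))
        - 2 * γ * ((γ / (2 * lam)) * (‖vk1 - vstar‖ ^ 2
            - lam * ‖ContinuousLinearMap.adjoint B (vk1 - vstar)‖ ^ 2))
        + 2 * γ ^ 2 * ‖e‖ ^ 2
        - 2 * γ * ⟪e, xbar - xstar⟫ :=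
  stmt_7_general f f' hconv hgrad β hLip B S h hhconv γ lam hγ0 hγβ hlam0 hρmax xstar vstar hvstar
    hopt1 xk w vk e he yk1 hyk1 vk1 hvk1mem hvk1min xk1 hxk1 xbar hxbar
end
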